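/- arXiv:2205.14127 — 4 statements merged into one kernel-verified Lean document; each statement's English description precedes it below -/
import Mathlib

section
/- Let N and T be real 3×3 orthogonal matrices (N Nᵀ = I, T Tᵀ = I), let Φ⁺ and Φ⁻ be real diagonal 3×3 matrices with nonnegative diagonal entries such that every diagonal entry of Φ = Φ⁺ + Φ⁻ is strictly positive, let α̃ > 0, and set A = T · diag(1, α̃, α̃) · Tᵀ. Then the matrix M = Φ⁺ N + Φ⁻ N A is invertible. -/
open Matrix

/-- Unisolvence core for the H(div) IFE space (Lemma 3.1): if `N`, `T` are orthogonal
3×3 matrices, `Φ⁺ = diagonal dp`, `Φ⁻ = diagonal dm` have nonnegative entries with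
`Φ = Φ⁺ + Φ⁻` having strictly positive diagonal, `α̃ > 0` and
`A = T * diag(1, α̃, α̃) * Tᵀ`, then `M = Φ⁺ N + Φ⁻ N A` is invertible. -/
theorem hdiv_ife_unisolvence_matrix_invertible
    (N T : Matrix (Fin 3) (Fin 3) ℝ)
    (hN : N * Nᵀ = 1) (hT : T * Tᵀ = 1)
    (dp dm : Fin 3 → ℝ) (hdp : ∀ i, 0 ≤ dp i) (hdm : ∀ i, 0 ≤ dm i)
    (hsum : ∀ i, 0 < dp i + dm i)
    (α : ℝ) (hα : 0 < α) :
    IsUnit (Matrix.diagonal dp * N +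
      Matrix.diagonal dm * N * (T * Matrix.diagonal ![1, α, α] * Tᵀ)) := by
  set d : Fin 3 → ℝ := ![1, α, α] with hd
  have hdpos : ∀ i, 0 < d i := by
    intro i
    fin_cases i
    exacts [one_pos, hα, hα]
  set A := T * Matrix.diagonal d * Tᵀ with hA
  rw [Matrix.isUnit_iff_isUnit_det, isUnit_iff_ne_zero]
  intro hdet
  obtain ⟨v, hv0, hMv⟩ := Matrix.exists_mulVec_eq_zero_iff.2 hdet
  set y := N *ᵥ v with hy
  set z := (N * A) *ᵥ v with hz
  -- componentwise relation
  have hcomp : ∀ i, dp i * y i + dm i * z i = 0 := by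
    intro i
    have := congrFun hMv i
    simpa [Matrix.add_mulVec, ← Matrix.mulVec_mulVec, Matrix.mulVec_diagonal,
      Matrix.mul_assoc, hy, hz] using this
  have hyz : ∀ i, y i * z i ≤ 0 := by
    intro i
    have h2y : dp i * (y i * y i) + dm i * (z i * y i) = 0 := by
      linear_combination (y i) * hcomp i
    have h2z : dp i * (y i * z i) + dm i * (z i * z i) = 0 := by
      linear_combination (z i) * hcomp i
    nlinarith [h2y, h2z, hsum i, mul_nonneg (hdp i) (mul_self_nonneg (y i)),
      mul_nonneg (hdm i) (mul_self_nonneg (z i))]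
  have hNtN : Nᵀ * N = 1 := mul_eq_one_comm.mp hN
  have hTtT : Tᵀ * T = 1 := mul_eq_one_comm.mp hT
  set w := Tᵀ *ᵥ v with hw
  have hw0 : w ≠ 0 := by
    intro h
    apply hv0
    have : T *ᵥ w = v := by
      rw [hw, Matrix.mulVec_mulVec, hT, Matrix.one_mulVec]
    rw [h, Matrix.mulVec_zero] at this
    exact this.symm
  -- the dot product equals the positive quadratic form
  have hdot : y ⬝ᵥ z = ∑ i, d i * w i * w i := by
    have h1 : y ⬝ᵥ z = v ⬝ᵥ (A *ᵥ v) := by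
      rw [dotProduct_comm, hz, hy, Matrix.dotProduct_mulVec,
        ← Matrix.mulVec_transpose, Matrix.mulVec_mulVec, ← Matrix.mul_assoc,
        hNtN, Matrix.one_mul, dotProduct_comm]
    rw [h1, hA, Matrix.mul_assoc, ← Matrix.mulVec_mulVec, ← Matrix.mulVec_mulVec, ← hw,
      Matrix.dotProduct_mulVec, ← Matrix.mulVec_transpose, ← hw]
    simp only [dotProduct, Matrix.mulVec_diagonal]
    exact Finset.sum_congr rfl fun i _ => by ring
  have hpos : 0 < ∑ i, d i * w i * w i := by
    obtain ⟨j, hj⟩ := Function.ne_iff.mp hw0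
    refine Finset.sum_pos' (fun i _ => ?_) ⟨j, Finset.mem_univ j, ?_⟩
    · have := mul_nonneg (hdpos i).le (mul_self_nonneg (w i))
      linarith [this, mul_assoc (d i) (w i) (w i)]
    · have h0 : 0 < w j * w j := mul_self_pos.mpr hj
      nlinarith [hdpos j, h0]
  have hnp : y ⬝ᵥ z ≤ 0 := Finset.sum_nonpos (fun i _ => hyz i)
  rw [hdot] at hnp
  linarith
end

section
/- Let D be a real diagonal n×n matrix whose diagonal entries all lie in the interval [0, 1], and let S be a real symmetric n×n matrix all of whose eigenvalues lie in [−r, r] for some r ≥ 0. Then every complex eigenvalue μ of the product matrix D·S (viewed as a matrix over ℂ) is real and satisfies |μ| ≤ r. -/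
/-!
Write `diagonal d = A * A` with `A = diagonal √d`. A nonzero eigenvalue of `A * (A * S)` is also
an eigenvalue of `A * S * A`, which is real symmetric, so it is real. In the Loewner order
`-r ≤ S ≤ r`, and since `Aᴴ * A ≤ 1`, conjugation by `A` keeps `A * S * A` between `-r` and `r`.
-/

open Matrix
open scoped MatrixOrder

namespace Matrix

variable {n 𝕜 : Type*} [Fintype n] [DecidableEq n] [RCLike 𝕜]

theorem mem_spectrum_of_mulVec_eq_smul {R : Type*} [CommRing R] {M : Matrix n n R} {μ : R}
    {v : n → R} (hv : v ≠ 0) (h : M *ᵥ v = μ • v) : μ ∈ spectrum R M := by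
  rw [← spectrum_toLin']
  exact (Module.End.hasEigenvalue_of_hasEigenvector
    ⟨Module.End.mem_eigenspace_iff.mpr h, hv⟩).mem_spectrum

theorem spectrum_star_mul_mul_subset_Icc {T C : Matrix n n 𝕜} (hT : T.IsHermitian) {r : ℝ}
    (hr : 0 ≤ r) (hTr : spectrum ℝ T ⊆ Set.Icc (-r) r) (hC : star C * C ≤ 1) :
    spectrum ℝ (star C * T * C) ⊆ Set.Icc (-r) r := by
  have hCTC : (star C * T * C).IsHermitian := isHermitian_conjTranspose_mul_mul C hT
  have hconj : ∀ s : ℝ, star C * algebraMap ℝ _ s * C = s • (star C * C) := fun s => by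
    rw [← Algebra.commutes, mul_assoc, ← Algebra.smul_def]
  have hle : star C * T * C ≤ algebraMap ℝ _ r := calc
    star C * T * C ≤ star C * algebraMap ℝ _ r * C :=
      star_left_conjugate_le_conjugate (le_algebraMap_of_spectrum_le fun x hx => (hTr hx).2) C
    _ = r • (star C * C) := hconj r
    _ ≤ r • 1 := smul_le_smul_of_nonneg_left hC hr
    _ = algebraMap ℝ _ r := (Algebra.algebraMap_eq_smul_one r).symm
  have hge : algebraMap ℝ _ (-r) ≤ star C * T * C := calc
    algebraMap ℝ (Matrix n n 𝕜) (-r) = -(r • 1) := by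
      rw [Algebra.algebraMap_eq_smul_one, neg_smul]
    _ ≤ -(r • (star C * C)) := neg_le_neg (smul_le_smul_of_nonneg_left hC hr)
    _ = star C * algebraMap ℝ _ (-r) * C := by rw [hconj, neg_smul]
    _ ≤ star C * T * C :=
      star_left_conjugate_le_conjugate (algebraMap_le_of_le_spectrum fun x hx => (hTr hx).1) C
  exact fun x hx =>
    ⟨(algebraMap_le_iff_le_spectrum).mp hge x hx, (le_algebraMap_iff_spectrum_le).mp hle x hx⟩

theorem IsHermitian.spectrum_map_algebraMap_subset {T : Matrix n n ℝ} (hT : T.IsHermitian) :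
    spectrum 𝕜 (T.map (algebraMap ℝ 𝕜)) ⊆ RCLike.ofReal '' spectrum ℝ T := by
  have hTc : (T.map (algebraMap ℝ 𝕜)).IsHermitian := hT.map _ fun x => by simp
  rw [hTc.spectrum_eq_image_range, ← hTc.spectrum_real_eq_range_eigenvalues]
  exact Set.image_mono (AlgHom.spectrum_apply_subset (Algebra.ofId ℝ 𝕜).mapMatrix T)

end Matrix

/-- Spectral estimate (3.9): if `D = diagonal d` with entries in `[0,1]` and `S` is
real symmetric with all eigenvalues in `[-r, r]`, then every complex eigenvalue `μ`
of `D * S` is real and satisfies `|μ| ≤ r`. -/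
theorem diagonal_mul_symmetric_eigenvalues_real_and_bounded
    {n : ℕ} (d : Fin n → ℝ) (hd : ∀ i, d i ∈ Set.Icc (0 : ℝ) 1)
    (S : Matrix (Fin n) (Fin n) ℝ) (hS : S.IsHermitian)
    (r : ℝ) (hr : 0 ≤ r) (hev : ∀ i, |hS.eigenvalues i| ≤ r)
    (μ : ℂ) (v : Fin n → ℂ) (hv : v ≠ 0)
    (heig : ((Matrix.diagonal d * S).map (Complex.ofReal)).mulVec v = μ • v) :
    μ.im = 0 ∧ ‖μ‖ ≤ r := by
  by_cases hμ : μ = 0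
  · simp [hμ, hr]
  set A : Matrix (Fin n) (Fin n) ℝ := diagonal fun i => √(d i)
  have hA_star : star A = A := by
    rw [star_eq_conjTranspose, diagonal_conjTranspose, star_trivial]
  have hAA : star A * A = diagonal d := by
    rw [hA_star, diagonal_mul_diagonal]
    exact congrArg diagonal (funext fun i => Real.mul_self_sqrt (hd i).1)
  have hAA_le : star A * A ≤ 1 := by
    rw [hAA, le_iff, ← diagonal_one, diagonal_sub, posSemidef_diagonal_iff]
    exact fun i => sub_nonneg.mpr (hd i).2
  have hS_spec : spectrum ℝ S ⊆ Set.Icc (-r) r := by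
    rw [hS.spectrum_real_eq_range_eigenvalues]
    rintro _ ⟨i, rfl⟩
    exact abs_le.mp (hev i)
  let φ := (Algebra.ofId ℝ ℂ).mapMatrix (m := Fin n)
  have hμ_DS : μ ∈ spectrum ℂ (φ (star A) * φ (A * S)) := by
    rw [← map_mul, ← mul_assoc, hAA]
    exact mem_spectrum_of_mulVec_eq_smul hv heig
  have hμ_ASA : μ ∈ spectrum ℂ (φ (star A * S * A)) := by
    have := (spectrum.unit_mem_mul_comm (r := Units.mk0 μ hμ)).mp hμ_DS
    rw [← map_mul] at this
    rwa [hA_star] at this ⊢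
  obtain ⟨x, hx, rfl⟩ :=
    (isHermitian_conjTranspose_mul_mul A hS).spectrum_map_algebraMap_subset hμ_ASA
  have hx_le := abs_le.mpr (spectrum_star_mul_mul_subset_Icc hS hr hS_spec hAA_le hx)
  exact ⟨by simp, by simpa using hx_le⟩
end

section
/- Let n ∈ ℝ³ be a unit vector, x₀ ∈ ℝ³, α⁺, α⁻, β⁺, β⁻ > 0. Define A c = ⟨c, n⟩ n + (α⁺/α⁻)(c − ⟨c, n⟩ n) and B c = (β⁺/β⁻)⟨c, n⟩ n + (c − ⟨c, n⟩ n). Let a⁺, b⁺ ∈ ℝ³ and set a⁻ = A a⁺, b⁻ = B b⁺, and define v^±(x) = a^± × (x − x₀) + b^±, where × is the cross product on ℝ³. Then: (i) v⁺(x) × n = v⁻(x) × n for every x in the plane {x : ⟨x − x₀, n⟩ = 0}; (ii) α⁺ (a⁺ × n) = α⁻ (a⁻ × n) (so the fields α^± curl v^± = 2 α^± a^± have matching tangential traces); and (iii) β⁺ ⟨v⁺(x₀), n⟩ = β⁻ ⟨v⁻(x₀), n⟩. -/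
/-!
By `(a × y) × n = ⟨a, n⟩ y - ⟨y, n⟩ a`, on the interface plane the tangential trace
of `a × (x - x₀) + b` depends only on the normal part of `a` and the tangential part of `b`,
which `A` and `B` leave unchanged. `A` scales the tangential part of `a` (hence `a × n`) by `α⁺/α⁻`,
and `B` scales the normal part of `b` by `β⁺/β⁻`, which gives the two flux conditions.
-/

open Matrix

variable {R : Type*} [CommRing R]

/-- The paper's `A` and `B` are `normalTangentialScale n 1 (α⁺ / α⁻)` and
`normalTangentialScale n (β⁺ / β⁻) 1`. -/
def normalTangentialScale (n : Fin 3 → R) (s t : R) (c : Fin 3 → R) : Fin 3 → R :=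
  s • ((c ⬝ᵥ n) • n) + t • (c - (c ⬝ᵥ n) • n)

theorem normalTangentialScale_dotProduct {n : Fin 3 → R} (hn : n ⬝ᵥ n = 1) (s t : R)
    (c : Fin 3 → R) : normalTangentialScale n s t c ⬝ᵥ n = s * (c ⬝ᵥ n) := by
  simp only [normalTangentialScale, add_dotProduct, sub_dotProduct, smul_dotProduct, hn,
    smul_eq_mul, mul_one, sub_self, mul_zero, add_zero]

theorem normalTangentialScale_cross (n : Fin 3 → R) (s t : R) (c : Fin 3 → R) :
    normalTangentialScale n s t c ⨯₃ n = t • (c ⨯₃ n) := by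
  simp only [normalTangentialScale, map_add, map_smul, map_sub, LinearMap.add_apply,
    LinearMap.smul_apply, LinearMap.sub_apply, cross_self, smul_zero, sub_zero, zero_add]

theorem cross_add_cross_of_dotProduct_eq_zero (a b : Fin 3 → R) {y n : Fin 3 → R}
    (hy : y ⬝ᵥ n = 0) : (a ⨯₃ y + b) ⨯₃ n = (a ⬝ᵥ n) • y + b ⨯₃ n := by
  rw [map_add, LinearMap.add_apply, cross_cross_eq_smul_sub_smul, hy, zero_smul, sub_zero]

theorem hcurl_ife_jump_conditions_general
    (n : Fin 3 → ℝ) (hn : n ⬝ᵥ n = 1) (x0 : Fin 3 → ℝ)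
    (αp αm βp βm : ℝ) (hαm : 0 < αm) (hβm : 0 < βm)
    (ap bp am bm : Fin 3 → ℝ)
    (ham : am = (ap ⬝ᵥ n) • n + (αp / αm) • (ap - (ap ⬝ᵥ n) • n))
    (hbm : bm = (βp / βm) • ((bp ⬝ᵥ n) • n) + (bp - (bp ⬝ᵥ n) • n)) :
    (∀ x : Fin 3 → ℝ, (x - x0) ⬝ᵥ n = 0 →
        (ap ⨯₃ (x - x0) + bp) ⨯₃ n = (am ⨯₃ (x - x0) + bm) ⨯₃ n) ∧
    αp • (ap ⨯₃ n) = αm • (am ⨯₃ n) ∧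
    βp * ((ap ⨯₃ (x0 - x0) + bp) ⬝ᵥ n) = βm * ((am ⨯₃ (x0 - x0) + bm) ⬝ᵥ n) := by
  have ha : am = normalTangentialScale n 1 (αp / αm) ap := by
    rw [ham, normalTangentialScale, one_smul]
  have hb : bm = normalTangentialScale n (βp / βm) 1 bp := by
    rw [hbm, normalTangentialScale, one_smul]
  refine ⟨fun x hx => ?_, ?_, ?_⟩
  · rw [cross_add_cross_of_dotProduct_eq_zero _ _ hx, cross_add_cross_of_dotProduct_eq_zero _ _ hx,
      ha, hb, normalTangentialScale_dotProduct hn, normalTangentialScale_cross, one_mul, one_smul]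
  · rw [ha, normalTangentialScale_cross, smul_smul, mul_div_cancel₀ _ hαm.ne']
  · rw [sub_self, map_zero, map_zero, zero_add, zero_add, hb,
      normalTangentialScale_dotProduct hn, ← mul_assoc, mul_div_cancel₀ _ hβm.ne']

/-- The H(curl) IFE functions of Table 1 satisfy the three approximate interface
jump conditions: with `a⁻ = A a⁺`, `b⁻ = B b⁺` and `v^±(x) = a^± × (x − x₀) + b^±`,
(i) tangential traces of `v^±` match on the plane `⟨x − x₀, n⟩ = 0`;
(ii) `α⁺ (a⁺ × n) = α⁻ (a⁻ × n)`; (iii) `β⁺ ⟨v⁺(x₀), n⟩ = β⁻ ⟨v⁻(x₀), n⟩`. -/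
theorem hcurl_ife_jump_conditions
    (n : Fin 3 → ℝ) (hn : n ⬝ᵥ n = 1) (x0 : Fin 3 → ℝ)
    (αp αm βp βm : ℝ) (hαp : 0 < αp) (hαm : 0 < αm) (hβp : 0 < βp) (hβm : 0 < βm)
    (ap bp am bm : Fin 3 → ℝ)
    (ham : am = (ap ⬝ᵥ n) • n + (αp / αm) • (ap - (ap ⬝ᵥ n) • n))
    (hbm : bm = (βp / βm) • ((bp ⬝ᵥ n) • n) + (bp - (bp ⬝ᵥ n) • n)) :
    (∀ x : Fin 3 → ℝ, (x - x0) ⬝ᵥ n = 0 →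
        (ap ⨯₃ (x - x0) + bp) ⨯₃ n = (am ⨯₃ (x - x0) + bm) ⨯₃ n) ∧
    αp • (ap ⨯₃ n) = αm • (am ⨯₃ n) ∧
    βp * ((ap ⨯₃ (x0 - x0) + bp) ⬝ᵥ n) = βm * ((am ⨯₃ (x0 - x0) + bm) ⬝ᵥ n) :=
  hcurl_ife_jump_conditions_general n hn x0 αp αm βp βm hαm hβm ap bp am bm ham hbm
end

section
/- Let n ∈ ℝ³ be a unit vector, x₀ ∈ ℝ³, α⁺, α⁻ > 0, and define A c = ⟨c, n⟩ n + (α⁺/α⁻)(c − ⟨c, n⟩ n). Let c ∈ ℝ, a⁺ ∈ ℝ³, set a⁻ = A a⁺, and define v^±(x) = c (x − x₀) + a^±. Then: (i) ⟨v⁺(x), n⟩ = ⟨v⁻(x), n⟩ for every x in the plane {x : ⟨x − x₀, n⟩ = 0}; (ii) α⁺ (v⁺(x₀) × n) = α⁻ (v⁻(x₀) × n), where × is the cross product on ℝ³; and (iii) both pieces have the same constant divergence: the sum of the diagonal entries of the (constant) Jacobian of v^± equals 3c for both signs. -/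
/-!
The map `A` keeps the normal component of `a⁺` and scales its tangential component by `α⁺/α⁻`.
So the normal traces agree, and since crossing with `n` kills the normal component,
`α⁻ (a⁻ × n) = α⁺ (a⁺ × n)`. The Jacobian of `c (x − x₀) + a` is `c • id`, of trace `3c`.
-/

open Matrix

section Decomposition

variable {R : Type*} [CommRing R]

theorem dotProduct_sub_dotProduct_smul_self {ι : Type*} [Fintype ι] {n : ι → R}
    (hn : n ⬝ᵥ n = 1) (a : ι → R) : (a - (a ⬝ᵥ n) • n) ⬝ᵥ n = 0 := by
  rw [sub_dotProduct, smul_dotProduct, hn, smul_eq_mul, mul_one, sub_self]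

theorem dotProduct_normal_add_smul_tangential {ι : Type*} [Fintype ι] {n : ι → R}
    (hn : n ⬝ᵥ n = 1) (a : ι → R) (k : R) :
    ((a ⬝ᵥ n) • n + k • (a - (a ⬝ᵥ n) • n)) ⬝ᵥ n = a ⬝ᵥ n := by
  rw [add_dotProduct, smul_dotProduct, smul_dotProduct, hn,
    dotProduct_sub_dotProduct_smul_self hn, smul_eq_mul, smul_zero, mul_one, add_zero]

theorem cross_normal_add_smul_tangential (a n : Fin 3 → R) (k : R) :
    ((a ⬝ᵥ n) • n + k • (a - (a ⬝ᵥ n) • n)) ⨯₃ n = k • (a ⨯₃ n) := by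
  simp only [map_add, map_sub, LinearMap.map_smul, LinearMap.add_apply, LinearMap.sub_apply,
    LinearMap.smul_apply, cross_self, smul_zero, sub_zero, zero_add]

end Decomposition

theorem hasFDerivAt_smul_sub_add {E : Type*} [NormedAddCommGroup E] [NormedSpace ℝ E]
    (c : ℝ) (x0 a x : E) :
    HasFDerivAt (fun y => c • (y - x0) + a) (c • ContinuousLinearMap.id ℝ E) x := by
  simpa using (((hasFDerivAt_id x).sub_const x0).const_smul c).add_const a

theorem sum_fderiv_smul_sub_add_apply_single {ι : Type*} [Fintype ι] [DecidableEq ι]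
    (c : ℝ) (x0 a x : ι → ℝ) :
    ∑ i, fderiv ℝ (fun y => c • (y - x0) + a) x (Pi.single i 1) i = Fintype.card ι * c := by
  simp [(hasFDerivAt_smul_sub_add c x0 a x).fderiv]

theorem hdiv_ife_jump_conditions_general
    (n : Fin 3 → ℝ) (hn : n ⬝ᵥ n = 1) (x0 : Fin 3 → ℝ)
    (αp αm : ℝ) (hαm : 0 < αm)
    (c : ℝ) (ap am : Fin 3 → ℝ)
    (ham : am = (ap ⬝ᵥ n) • n + (αp / αm) • (ap - (ap ⬝ᵥ n) • n)) :
    (∀ x : Fin 3 → ℝ, (x - x0) ⬝ᵥ n = 0 →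
        (c • (x - x0) + ap) ⬝ᵥ n = (c • (x - x0) + am) ⬝ᵥ n) ∧
    αp • ((c • (x0 - x0) + ap) ⨯₃ n) = αm • ((c • (x0 - x0) + am) ⨯₃ n) ∧
    (∀ x : Fin 3 → ℝ,
      (∑ i : Fin 3, fderiv ℝ (fun y : Fin 3 → ℝ => c • (y - x0) + ap) x (Pi.single i 1) i
        = 3 * c) ∧
      (∑ i : Fin 3, fderiv ℝ (fun y : Fin 3 → ℝ => c • (y - x0) + am) x (Pi.single i 1) i
        = 3 * c)) := by
  have hdiv (a : Fin 3 → ℝ) (x : Fin 3 → ℝ) :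
      ∑ i : Fin 3, fderiv ℝ (fun y : Fin 3 → ℝ => c • (y - x0) + a) x (Pi.single i 1) i
        = 3 * c := by
    rw [sum_fderiv_smul_sub_add_apply_single, Fintype.card_fin, Nat.cast_ofNat]
  refine ⟨fun x _ => ?_, ?_, fun x => ⟨hdiv ap x, hdiv am x⟩⟩
  · rw [add_dotProduct, add_dotProduct, ham, dotProduct_normal_add_smul_tangential hn]
  · rw [sub_self, smul_zero, zero_add, zero_add, ham, cross_normal_add_smul_tangential,
      smul_smul, mul_div_cancel₀ _ hαm.ne']

/-- The H(div) IFE functions of Table 1 satisfy the three approximate interface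
jump conditions: with `a⁻ = A a⁺` and `v^±(x) = c (x − x₀) + a^±`,
(i) normal traces of `v^±` match on the plane `⟨x − x₀, n⟩ = 0`;
(ii) `α⁺ (v⁺(x₀) × n) = α⁻ (v⁻(x₀) × n)`;
(iii) both pieces have the same constant divergence `3c` (trace of the Jacobian). -/
theorem hdiv_ife_jump_conditions
    (n : Fin 3 → ℝ) (hn : n ⬝ᵥ n = 1) (x0 : Fin 3 → ℝ)
    (αp αm : ℝ) (hαp : 0 < αp) (hαm : 0 < αm)
    (c : ℝ) (ap am : Fin 3 → ℝ)
    (ham : am = (ap ⬝ᵥ n) • n + (αp / αm) • (ap - (ap ⬝ᵥ n) • n)) :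
    (∀ x : Fin 3 → ℝ, (x - x0) ⬝ᵥ n = 0 →
        (c • (x - x0) + ap) ⬝ᵥ n = (c • (x - x0) + am) ⬝ᵥ n) ∧
    αp • ((c • (x0 - x0) + ap) ⨯₃ n) = αm • ((c • (x0 - x0) + am) ⨯₃ n) ∧
    (∀ x : Fin 3 → ℝ,
      (∑ i : Fin 3, fderiv ℝ (fun y : Fin 3 → ℝ => c • (y - x0) + ap) x (Pi.single i 1) i
        = 3 * c) ∧
      (∑ i : Fin 3, fderiv ℝ (fun y : Fin 3 → ℝ => c • (y - x0) + am) x (Pi.single i 1) i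
        = 3 * c)) :=
  hdiv_ife_jump_conditions_general n hn x0 αp αm hαm c ap am ham
end
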